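/- Let P be the transition matrix of a positive recurrent, stochastically monotone single-birth Markov chain on ℤ⁺ with stationary distribution π having finite mean, and assume S_P := sup_{h∈H} sup_{l∈ℤ⁺} |m_l(h)| < ∞. Let (Z_t)_{t≥0} be the chain started at Z_0=0, so that the law of Z_t is μ_t = δ_0 P^t. Then for every t∈ℤ⁺, d_TV(Z_t, π) ≤ S_P · (𝔼Z_{t+1} − 𝔼Z_t), where 𝔼Z_t = ∑_k k·μ_t(k). -/

import Mathlib

open scoped BigOperators

/-- `P` is a (row-stochastic) transition matrix on `ℤ⁺ = ℕ`. -/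
def IsTransMat (P : ℕ → ℕ → ℝ) : Prop :=
  (∀ i j, 0 ≤ P i j) ∧ ∀ i, HasSum (P i) 1

/-- `P` is the transition matrix of a single-birth chain:
`P i (i+1) > 0` and `P i j = 0` for `j > i + 1`. -/
def IsSingleBirth (P : ℕ → ℕ → ℝ) : Prop :=
  IsTransMat P ∧ (∀ i, 0 < P i (i + 1)) ∧ ∀ i j, i + 1 < j → P i j = 0

/-- `pim` is a stationary distribution for `P`. -/
def IsStationaryDistr (P : ℕ → ℕ → ℝ) (pim : ℕ → ℝ) : Prop :=
  (∀ j, 0 ≤ pim j) ∧ HasSum pim 1 ∧ ∀ j, ∑' i, pim i * P i j = pim j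

/-- Tail probability `∑_{k > j} μ k` of a mass function `μ`. -/
noncomputable def tail (μ : ℕ → ℝ) (j : ℕ) : ℝ := ∑' k, if j < k then μ k else 0

/-- Total variation distance between two mass functions on `ℕ`:
`d_TV = ∑_j |μ j - ν j| = sup_{|h| ≤ 1} |𝔼 h(X) - 𝔼 h(Y)|`. -/
noncomputable def dTV (μ ν : ℕ → ℝ) : ℝ := ∑' j, |μ j - ν j|

/-- `m` is the sequence `m_j(h)` given by the single-birth recursion:
`m_0(h) = ĥ(0)/P_{0,1}` and, for `j ≥ 1`,
`m_j(h) = (1/P_{j,j+1}) (ĥ(j) + ∑_{k=0}^{j-1} m_k(h) ∑_{l=0}^{k} P_{j,l})`,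
where `ĥ(j) = h(j) - ∑_k h(k) π_k`. -/
def IsMSeq (P : ℕ → ℕ → ℝ) (pim : ℕ → ℝ) (h : ℕ → ℝ) (m : ℕ → ℝ) : Prop :=
  m 0 = (h 0 - ∑' k, h k * pim k) / P 0 1 ∧
  ∀ j, 1 ≤ j →
    m j = (1 / P j (j + 1)) *
      ((h j - ∑' k, h k * pim k) +
        ∑ k ∈ Finset.range j, m k * ∑ l ∈ Finset.range (k + 1), P j l)

/-- The set of values `|m_l(h)|` over `h ∈ H` (i.e. `|h| ≤ 1`) and `l ∈ ℤ⁺`;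
its supremum is `S_P`. -/
def MSet (P : ℕ → ℕ → ℝ) (pim : ℕ → ℝ) : Set ℝ :=
  {x | ∃ h m, (∀ j, |h j| ≤ 1) ∧ IsMSeq P pim h m ∧ ∃ l, x = |m l|}


/-- The law `μ_t = δ_0 P^t` of the chain at time `t`, started from `Z_0 = 0`:
`μ_0 = δ_0` and `μ_{t+1}(j) = ∑_i μ_t(i) P_{i,j}`. -/
noncomputable def law (P : ℕ → ℕ → ℝ) : ℕ → ℕ → ℝ
  | 0 => fun j => if j = 0 then 1 else 0
  | t + 1 => fun j => ∑' i, law P t i * P i j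

/-! ### Auxiliary lemmas -/


noncomputable def mseq (P : ℕ → ℕ → ℝ) (pim h : ℕ → ℝ) : ℕ → ℝ
  | 0 => (h 0 - ∑' k, h k * pim k) / P 0 1
  | j + 1 => (1 / P (j + 1) (j + 1 + 1)) *
      ((h (j + 1) - ∑' k, h k * pim k) +
        ∑ k ∈ (Finset.range (j + 1)).attach,
          mseq P pim h k.1 * ∑ l ∈ Finset.range (k.1 + 1), P (j + 1) l)
  decreasing_by exact Finset.mem_range.mp k.2

lemma mseq_spec (P : ℕ → ℕ → ℝ) (pim h : ℕ → ℝ) : IsMSeq P pim h (mseq P pim h) := by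
  constructor
  · rw [mseq]
  · intro j hj
    obtain ⟨j, rfl⟩ : ∃ j', j = j' + 1 := ⟨j - 1, by omega⟩
    rw [mseq, Finset.sum_attach (Finset.range (j + 1))
      (fun k => mseq P pim h k * ∑ l ∈ Finset.range (k + 1), P (j + 1) l)]

lemma law_nonneg {P : ℕ → ℕ → ℝ} (hP : IsSingleBirth P) : ∀ t j, 0 ≤ law P t j := by
  intro t
  induction t with
  | zero => intro j; simp only [law]; split <;> norm_num
  | succ t ih =>
    intro j
    exact tsum_nonneg fun i => mul_nonneg (ih i) (hP.1.1 i j)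

lemma law_eq_zero {P : ℕ → ℕ → ℝ} (hP : IsSingleBirth P) : ∀ t j, t < j → law P t j = 0 := by
  intro t
  induction t with
  | zero => intro j hj; simp only [law]; rw [if_neg (by omega)]
  | succ t ih =>
    intro j hj
    have : ∀ i, law P t i * P i j = 0 := by
      intro i
      by_cases hi : i ≤ t
      · rw [hP.2.2 i j (by omega), mul_zero]
      · rw [ih i (by omega), zero_mul]
    calc (law P (t+1)) j = ∑' i, law P t i * P i j := rfl
      _ = ∑' _ : ℕ, (0:ℝ) := tsum_congr this
      _ = 0 := tsum_zero

lemma law_succ_eq_sum {P : ℕ → ℕ → ℝ} (hP : IsSingleBirth P) (t j : ℕ) :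
    law P (t + 1) j = ∑ i ∈ Finset.range (t + 1), law P t i * P i j := by
  have : ∀ i ∉ Finset.range (t + 1), law P t i * P i j = 0 := by
    intro i hi
    rw [law_eq_zero hP t i (by simpa using Finset.mem_range.not.mp hi), zero_mul]
  calc law P (t+1) j = ∑' i, law P t i * P i j := rfl
    _ = _ := tsum_eq_sum this

lemma row_sum {P : ℕ → ℕ → ℝ} (hP : IsSingleBirth P) (i N : ℕ) (hi : i + 1 < N) :
    ∑ j ∈ Finset.range N, P i j = 1 := by
  have h0 : ∀ j ∉ Finset.range N, P i j = 0 := by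
    intro j hj
    exact hP.2.2 i j (by simp only [Finset.mem_range, not_lt] at hj; omega)
  rw [← (tsum_eq_sum h0 : ∑' j, P i j = _)]
  exact (hP.1.2 i).tsum_eq

lemma law_mass {P : ℕ → ℕ → ℝ} (hP : IsSingleBirth P) :
    ∀ t, ∑ j ∈ Finset.range (t + 1), law P t j = 1 := by
  intro t
  induction t with
  | zero => simp [law]
  | succ t ih =>
    have h1 : ∑ j ∈ Finset.range (t + 2), law P (t+1) j
        = ∑ i ∈ Finset.range (t + 1), law P t i * ∑ j ∈ Finset.range (t + 2), P i j := by
      simp_rw [law_succ_eq_sum hP, Finset.mul_sum]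
      exact Finset.sum_comm
    rw [h1]
    have h2 : ∀ i ∈ Finset.range (t + 1),
        law P t i * ∑ j ∈ Finset.range (t + 2), P i j = law P t i := by
      intro i hi
      rw [row_sum hP i (t+2) (by simp at hi; omega), mul_one]
    rw [Finset.sum_congr rfl h2, ih]

lemma sum_extend {f : ℕ → ℝ} {a b : ℕ} (hab : a ≤ b) (h0 : ∀ j, a ≤ j → f j = 0) :
    ∑ j ∈ Finset.range a, f j = ∑ j ∈ Finset.range b, f j := by
  apply Finset.sum_subset (Finset.range_subset_range.mpr hab)
  intro j _ hj
  exact h0 j (by simpa using Finset.mem_range.not.mp hj)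

lemma tail_eq_sum {μ : ℕ → ℝ} {N : ℕ} (h0 : ∀ k, N ≤ k → μ k = 0) (m : ℕ) :
    tail μ m = ∑ k ∈ Finset.range N, if m < k then μ k else 0 := by
  apply tsum_eq_sum
  intro k hk
  rw [h0 k (by simpa using Finset.mem_range.not.mp hk)]
  simp

lemma range_sum_ite {N j : ℕ} (hj : j ≤ N) (f : ℕ → ℝ) :
    ∑ k ∈ Finset.range N, (if k < j then f k else 0) = ∑ k ∈ Finset.range j, f k := by
  rw [Finset.sum_ite, Finset.sum_const_zero, add_zero]
  apply Finset.sum_congr _ (fun _ _ => rfl)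
  ext k
  simp only [Finset.mem_filter, Finset.mem_range]
  omega

lemma abel_sum (μ g : ℕ → ℝ) (N : ℕ) :
    ∑ j ∈ Finset.range N, μ j * (∑ k ∈ Finset.range j, g k)
      = ∑ k ∈ Finset.range N, g k * (∑ j ∈ Finset.range N, if k < j then μ j else 0) := by
  have h1 : ∀ j ∈ Finset.range N, μ j * (∑ k ∈ Finset.range j, g k)
      = ∑ k ∈ Finset.range N, (if k < j then μ j * g k else 0) := by
    intro j hj
    rw [range_sum_ite (by simp at hj; omega) (fun k => μ j * g k), Finset.mul_sum]
  rw [Finset.sum_congr rfl h1, Finset.sum_comm]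
  apply Finset.sum_congr rfl
  intro k _
  rw [Finset.mul_sum]
  apply Finset.sum_congr rfl
  intro j _
  split <;> ring

lemma dominance (μ ν T : ℕ → ℝ) (N : ℕ)
    (hT : ∀ i, T i ≤ T (i + 1))
    (hmass : ∑ j ∈ Finset.range N, μ j = ∑ j ∈ Finset.range N, ν j)
    (htail : ∀ k, (∑ j ∈ Finset.range N, if k < j then μ j else 0)
      ≤ ∑ j ∈ Finset.range N, if k < j then ν j else 0) :
    ∑ j ∈ Finset.range N, μ j * T j ≤ ∑ j ∈ Finset.range N, ν j * T j := by
  have htel : ∀ n : ℕ, ∑ k ∈ Finset.range n, (T (k+1) - T k) = T n - T 0 := by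
    intro n
    induction n with
    | zero => simp
    | succ n ih => rw [Finset.sum_range_succ, ih]; ring
  have hdecomp : ∀ ρ : ℕ → ℝ, ∑ j ∈ Finset.range N, ρ j * T j
      = T 0 * (∑ j ∈ Finset.range N, ρ j)
        + ∑ k ∈ Finset.range N, (T (k+1) - T k) *
            (∑ j ∈ Finset.range N, if k < j then ρ j else 0) := by
    intro ρ
    rw [← abel_sum ρ (fun k => T (k+1) - T k) N, Finset.mul_sum, ← Finset.sum_add_distrib]
    apply Finset.sum_congr rfl
    intro j _
    rw [htel]; ring
  rw [hdecomp μ, hdecomp ν, hmass]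
  apply add_le_add_right
  apply Finset.sum_le_sum
  intro k _
  exact mul_le_mul_of_nonneg_left (htail k) (sub_nonneg.mpr (hT k))

lemma tail_law_succ {P : ℕ → ℕ → ℝ} (hP : IsSingleBirth P) (s m : ℕ) :
    tail (law P (s + 1)) m = ∑ i ∈ Finset.range (s + 1), law P s i * tail (P i) m := by
  rw [tail_eq_sum (N := s + 2) (fun k hk => law_eq_zero hP (s+1) k (by omega))]
  have h1 : ∀ k ∈ Finset.range (s + 2), (if m < k then law P (s+1) k else 0)
      = ∑ i ∈ Finset.range (s + 1), (if m < k then law P s i * P i k else 0) := by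
    intro k _
    split
    · rw [law_succ_eq_sum hP]
    · rw [Finset.sum_const_zero]
  rw [Finset.sum_congr rfl h1, Finset.sum_comm]
  apply Finset.sum_congr rfl
  intro i hi
  have hi' : i < s + 1 := Finset.mem_range.mp hi
  rw [tail_eq_sum (μ := P i) (N := s + 2) (fun k hk => hP.2.2 i k (by omega)), Finset.mul_sum]
  apply Finset.sum_congr rfl
  intro k _
  split <;> simp

lemma tail_law_mono {P : ℕ → ℕ → ℝ} (hP : IsSingleBirth P)
    (hmono : ∀ i m : ℕ, tail (P i) m ≤ tail (P (i + 1)) m) :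
    ∀ t m, tail (law P t) m ≤ tail (law P (t + 1)) m := by
  intro t
  induction t with
  | zero =>
    intro m
    have h0 : tail (law P 0) m = 0 := by
      rw [tail_eq_sum (N := 1) (fun k hk => law_eq_zero hP 0 k (by omega))]
      simp
    rw [h0, tail_eq_sum (N := 2) (fun k hk => law_eq_zero hP 1 k (by omega))]
    apply Finset.sum_nonneg
    intro k _
    split
    · exact law_nonneg hP 1 k
    · exact le_refl 0
  | succ t ih =>
    intro m
    rw [tail_law_succ hP t m, tail_law_succ hP (t+1) m]
    rw [sum_extend (f := fun i => law P t i * tail (P i) m) (by omega : t + 1 ≤ t + 2)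
      (fun j hj => by show law P t j * tail (P j) m = 0; rw [law_eq_zero hP t j (by omega), zero_mul])]
    apply dominance
    · exact fun i => hmono i m
    · rw [← sum_extend (f := law P t) (by omega : t + 1 ≤ t + 2)
        (fun j hj => law_eq_zero hP t j (by omega)), law_mass hP t, law_mass hP (t+1)]
    · intro k
      rw [← tail_eq_sum (N := t + 2) (fun j hj => law_eq_zero hP t j (by omega)),
        ← tail_eq_sum (N := t + 2) (fun j hj => law_eq_zero hP (t+1) j (by omega))]
      exact ih k

lemma mseq_key {P : ℕ → ℕ → ℝ} {pim h m : ℕ → ℝ} (hpos : ∀ i, 0 < P i (i + 1))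
    (hm : IsMSeq P pim h m) (i : ℕ) :
    P i (i + 1) * m i = (h i - ∑' k, h k * pim k)
      + ∑ k ∈ Finset.range i, m k * ∑ l ∈ Finset.range (k + 1), P i l := by
  cases i with
  | zero =>
    rw [hm.1, mul_comm, div_mul_cancel₀ _ (ne_of_gt (hpos 0))]
    simp
  | succ j =>
    rw [hm.2 (j+1) (by omega), ← mul_assoc, mul_one_div_cancel (ne_of_gt (hpos (j+1))), one_mul]

lemma stein_pt {P : ℕ → ℕ → ℝ} {pim h m : ℕ → ℝ} (hP : IsSingleBirth P)
    (hm : IsMSeq P pim h m) (i N : ℕ) (hi : i + 1 < N) :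
    h i - (∑' k, h k * pim k)
      = (∑ j ∈ Finset.range N, P i j * (∑ k ∈ Finset.range j, m k))
        - ∑ k ∈ Finset.range i, m k := by
  set F : ℕ → ℝ := fun j => ∑ k ∈ Finset.range j, m k with hF
  have hshrink : ∑ j ∈ Finset.range N, P i j * F j = ∑ j ∈ Finset.range (i + 2), P i j * F j := by
    symm
    apply sum_extend (by omega)
    intro j hj
    rw [hP.2.2 i j (by omega), zero_mul]
  have hclaim : ∑ j ∈ Finset.range (i + 1), P i j * (F i - F j)
      = ∑ k ∈ Finset.range i, m k * ∑ l ∈ Finset.range (k + 1), P i l := by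
    have hdiff : ∀ j ∈ Finset.range (i + 1),
        P i j * (F i - F j) = ∑ k ∈ Finset.range i, (if j ≤ k then P i j * m k else 0) := by
      intro j hj
      have hji : j ≤ i := by simp at hj; omega
      have hFj : F j = ∑ k ∈ Finset.range i, (if k < j then m k else 0) :=
        (range_sum_ite hji m).symm
      have hsplit : F i = (∑ k ∈ Finset.range i, (if k < j then m k else 0))
          + ∑ k ∈ Finset.range i, (if j ≤ k then m k else 0) := by
        rw [← Finset.sum_add_distrib]
        apply Finset.sum_congr rfl
        intro k _
        by_cases hkj : k < j
        · rw [if_pos hkj, if_neg (by omega), add_zero]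
        · rw [if_neg hkj, if_pos (by omega), zero_add]
      have hFd : F i - F j = ∑ k ∈ Finset.range i, (if j ≤ k then m k else 0) := by
        rw [hFj, hsplit]; ring
      rw [hFd, Finset.mul_sum]
      apply Finset.sum_congr rfl
      intro k _
      split <;> ring
    rw [Finset.sum_congr rfl hdiff, Finset.sum_comm]
    apply Finset.sum_congr rfl
    intro k hk
    have hki : k < i := Finset.mem_range.mp hk
    have : ∀ j ∈ Finset.range (i + 1), (if j ≤ k then P i j * m k else 0)
        = (if j < k + 1 then P i j * m k else 0) := by
      intro j _
      congr 1
      simp [Nat.lt_succ_iff]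
    rw [Finset.sum_congr rfl this, range_sum_ite (by omega) (fun j => P i j * m k),
      Finset.mul_sum]
    exact Finset.sum_congr rfl (fun j _ => mul_comm _ _)
  have hrow : ∑ j ∈ Finset.range (i + 2), P i j = 1 := row_sum hP i (i+2) (by omega)
  have hkey := mseq_key hP.2.1 hm i
  rw [hshrink, Finset.sum_range_succ]
  have hF1 : F (i + 1) = F i + m i := Finset.sum_range_succ m i
  have hexp : ∑ j ∈ Finset.range (i + 1), P i j * F j
      = (∑ j ∈ Finset.range (i + 1), P i j) * F i
        - ∑ j ∈ Finset.range (i + 1), P i j * (F i - F j) := by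
    rw [Finset.sum_mul, ← Finset.sum_sub_distrib]
    apply Finset.sum_congr rfl
    intro j _
    ring
  rw [hexp, hclaim, hF1]
  have hrow' : ∑ j ∈ Finset.range (i + 1), P i j = 1 - P i (i + 1) := by
    have := hrow
    rw [Finset.sum_range_succ] at this
    linarith
  rw [hrow']
  linarith [hkey]

lemma mean_eq {P : ℕ → ℕ → ℝ} (hP : IsSingleBirth P) (s N : ℕ) (hs : s < N) :
    ∑' k : ℕ, (k : ℝ) * law P s k = ∑ k ∈ Finset.range N, tail (law P s) k := by
  rw [tsum_eq_sum (s := Finset.range N)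
    (fun k hk => by rw [law_eq_zero hP s k (by simp at hk; omega), mul_zero])]
  have h1 : ∀ k ∈ Finset.range N, (k : ℝ) * law P s k
      = law P s k * ∑ l ∈ Finset.range k, (1 : ℝ) := by
    intro k _; simp [mul_comm]
  rw [Finset.sum_congr rfl h1, abel_sum (law P s) (fun _ => 1) N]
  apply Finset.sum_congr rfl
  intro k _
  rw [one_mul, ← tail_eq_sum (fun j hj => law_eq_zero hP s j (by omega))]


/-- **Corollary 2 (convergence to stationarity).** For a positive recurrent,
stochastically monotone single-birth chain started at `0`, with stationary
distribution `π` of finite mean and `S_P = sup_{h∈H} sup_l |m_l(h)| < ∞`,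
`d_TV(Z_t, π) ≤ S_P (𝔼 Z_{t+1} - 𝔼 Z_t)`. -/
theorem convergence_to_stationarity
    (P : ℕ → ℕ → ℝ) (pim : ℕ → ℝ)
    (hP : IsSingleBirth P)
    (hmono : ∀ i m : ℕ, tail (P i) m ≤ tail (P (i + 1)) m)
    (hpim : IsStationaryDistr P pim)
    (hpimMean : Summable fun k : ℕ => (k : ℝ) * pim k)
    (hSfin : BddAbove (MSet P pim)) (t : ℕ) :
    dTV (law P t) pim ≤ sSup (MSet P pim) *
      ((∑' k : ℕ, (k : ℝ) * law P (t + 1) k) - ∑' k : ℕ, (k : ℝ) * law P t k) := by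
  classical
  set S := sSup (MSet P pim) with hSdef
  set h : ℕ → ℝ := fun j => if pim j ≤ law P t j then 1 else -1 with hh
  have habs : ∀ j, |h j| ≤ 1 := by
    intro j; rw [hh]; dsimp only; split <;> simp
  set m := mseq P pim h with hmdef
  have hm : IsMSeq P pim h m := mseq_spec P pim h
  have hSb : ∀ l, |m l| ≤ S := fun l => le_csSup hSfin ⟨h, m, habs, hm, l, rfl⟩
  set c := ∑' k, h k * pim k with hc
  set N := t + 2 with hN
  have hμ0 : ∀ j, N ≤ j → law P t j = 0 := fun j hj => law_eq_zero hP t j (by omega)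
  have hπsum : Summable pim := hpim.2.1.summable
  have hhπ : Summable (fun j => h j * pim j) := by
    apply Summable.of_abs
    apply Summable.of_nonneg_of_le (fun j => abs_nonneg _) (fun j => ?_) hπsum
    rw [abs_mul]
    calc |h j| * |pim j| ≤ 1 * |pim j| := mul_le_mul_of_nonneg_right (habs j) (abs_nonneg _)
      _ = pim j := by rw [one_mul, abs_of_nonneg (hpim.1 j)]
  have hhμ : Summable (fun j => h j * law P t j) :=
    summable_of_ne_finset_zero (s := Finset.range N)
      (fun j hj => by rw [hμ0 j (by simpa using Finset.mem_range.not.mp hj), mul_zero])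
  have hmass0 : ∑ j ∈ Finset.range N, law P t j = 1 := by
    rw [← sum_extend (f := law P t) (by omega : t + 1 ≤ N)
      (fun j hj => law_eq_zero hP t j (by omega))]
    exact law_mass hP t
  have stepA : dTV (law P t) pim = ∑' j, h j * (law P t j - pim j) := by
    apply tsum_congr
    intro j
    rw [hh]; dsimp only
    by_cases hj : pim j ≤ law P t j
    · rw [if_pos hj, one_mul, abs_of_nonneg (sub_nonneg.mpr hj)]
    · rw [if_neg hj, abs_of_neg (sub_neg.mpr (lt_of_not_ge hj))]; ring
  have stepB : ∑' j, h j * (law P t j - pim j)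
      = (∑ j ∈ Finset.range N, h j * law P t j) - c := by
    have h1 : ∀ j : ℕ, h j * (law P t j - pim j) = h j * law P t j - h j * pim j :=
      fun j => by ring
    rw [tsum_congr h1, Summable.tsum_sub hhμ hhπ, hc]
    congr 1
    exact tsum_eq_sum
      (fun j hj => by rw [hμ0 j (by simpa using Finset.mem_range.not.mp hj), mul_zero])
  have stepC : (∑ j ∈ Finset.range N, h j * law P t j) - c
      = ∑ j ∈ Finset.range N, law P t j * (h j - c) := by
    have h1 : ∀ j ∈ Finset.range N, law P t j * (h j - c)
        = h j * law P t j - law P t j * c := fun j _ => by ring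
    rw [Finset.sum_congr rfl h1, Finset.sum_sub_distrib, ← Finset.sum_mul, hmass0, one_mul]
  have stepD : ∑ j ∈ Finset.range N, law P t j * (h j - c)
      = (∑ l ∈ Finset.range N, law P (t + 1) l * (∑ k ∈ Finset.range l, m k))
        - ∑ j ∈ Finset.range N, law P t j * (∑ k ∈ Finset.range j, m k) := by
    have hpt : ∀ j ∈ Finset.range N, law P t j * (h j - c)
        = law P t j * (∑ l ∈ Finset.range N, P j l * (∑ k ∈ Finset.range l, m k))
          - law P t j * (∑ k ∈ Finset.range j, m k) := by
      intro j hj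
      by_cases hjt : j + 1 < N
      · rw [← mul_sub]
        congr 1
        exact stein_pt hP hm j N hjt
      · have hz : law P t j = 0 := law_eq_zero hP t j (by simp at hj; omega)
        rw [hz]; ring
    rw [Finset.sum_congr rfl hpt, Finset.sum_sub_distrib]
    congr 1
    have h2 : ∀ j ∈ Finset.range N,
        law P t j * (∑ l ∈ Finset.range N, P j l * (∑ k ∈ Finset.range l, m k))
        = ∑ l ∈ Finset.range N, law P t j * P j l * (∑ k ∈ Finset.range l, m k) := by
      intro j _
      rw [Finset.mul_sum]
      exact Finset.sum_congr rfl (fun l _ => by ring)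
    rw [Finset.sum_congr rfl h2, Finset.sum_comm]
    apply Finset.sum_congr rfl
    intro l _
    have h3 : law P (t + 1) l = ∑ j ∈ Finset.range N, law P t j * P j l := by
      rw [law_succ_eq_sum hP t l]
      exact sum_extend (by omega)
        (fun j hj => by show law P t j * P j l = 0; rw [law_eq_zero hP t j (by omega), zero_mul])
    rw [h3, Finset.sum_mul]
  have stepE : ∀ s : ℕ, s < N →
      ∑ j ∈ Finset.range N, law P s j * (∑ k ∈ Finset.range j, m k)
        = ∑ k ∈ Finset.range N, m k * tail (law P s) k := by
    intro s hs
    rw [abel_sum (law P s) m N]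
    apply Finset.sum_congr rfl
    intro k _
    rw [← tail_eq_sum (fun j hj => law_eq_zero hP s j (by omega))]
  have key : dTV (law P t) pim
      = ∑ k ∈ Finset.range N, m k * (tail (law P (t + 1)) k - tail (law P t) k) := by
    rw [stepA, stepB, stepC, stepD, stepE (t + 1) (by omega), stepE t (by omega),
      ← Finset.sum_sub_distrib]
    exact Finset.sum_congr rfl (fun k _ => by ring)
  rw [key, mean_eq hP (t + 1) N (by omega), mean_eq hP t N (by omega),
    ← Finset.sum_sub_distrib, Finset.mul_sum]
  apply Finset.sum_le_sum
  intro k _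
  exact mul_le_mul_of_nonneg_right ((le_abs_self _).trans (hSb k))
    (sub_nonneg.mpr (tail_law_mono hP hmono t k))
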